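/- For t ∈ ℂ with |t| < 1, set ω_t := (i/2)(φ1∧φ̄1 + φ2∧φ̄2 + φ3∧φ̄3) ∈ Λ^{1,1}. Then ∂_t∂̄_t(ω_t) = 0 if and only if |t|² + Re(t) − Im(t) = 0. (That is, the invariant Hermitian metric ω_t on the deformation X_t of the Calabi–Eckmann manifold S³×S³ is SKT exactly when |t|² + Re(t) − Im(t) = 0.) -/

import Mathlib

/-! By the Leibniz rule everything reduces to the structure equations. `∂̄_t` kills `φ^{11̄}` and
`φ^{22̄}`, while `∂̄_t φ^{33̄} = (t - i) φ^{11̄3̄} + (t + 1) φ^{22̄3̄}`. Applying `∂_t`, the terms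
coming from `∂_t φ1, ∂_t φ2, ∂_t φ̄1, ∂_t φ̄2` cancel in pairs and only `∂_t φ̄3` contributes, so
`∂_t∂̄_t ω_t = (i/2)((t - i)(t̄ + 1) + (t + 1)(t̄ + i)) φ^{121̄2̄}`, and the
coefficient equals `i(|t|² + Re t - Im t)`. -/

open Complex

noncomputable section

/-- The 64-dimensional exterior algebra on six generators, modelled as
functions from subsets of `Fin 6` to `ℂ`. The generators `φ 0, φ 1, φ 2`
represent `φ1, φ2, φ3` (bidegree `(1,0)`) and `φ 3, φ 4, φ 5` represent
`φ̄1, φ̄2, φ̄3` (bidegree `(0,1)`). -/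
abbrev Lam : Type := Finset (Fin 6) → ℂ

/-- Basis monomial indexed by a subset of the generators. -/
def mon (S : Finset (Fin 6)) : Lam := Pi.single S 1

/-- The generators. -/
def φ (j : Fin 6) : Lam := mon {j}

/-- The Koszul sign. -/
def wsign (T U : Finset (Fin 6)) : ℂ :=
  (-1 : ℂ) ^ (((T ×ˢ U).filter fun p => p.2 < p.1).card)

/-- The wedge product. -/
def wedge (x y : Lam) : Lam :=
  fun S => ∑ T ∈ S.powerset, wsign T (S \ T) * x T * y (S \ T)

infixr:70 " ⋏ " => wedge

/-- The bidegree-`(p,q)` component `Λ^{p,q}`. -/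
def Lpq (p q : ℕ) : Submodule ℂ Lam where
  carrier := {x | ∀ S : Finset (Fin 6),
    ¬((S.filter fun i : Fin 6 => (i : ℕ) < 3).card = p ∧ (S.filter fun i : Fin 6 => 3 ≤ (i : ℕ)).card = q) →
      x S = 0}
  add_mem' := by intro a b ha hb S hS; simp [ha S hS, hb S hS]
  zero_mem' := by intro S _; rfl
  smul_mem' := by intro c x hx S hS; simp [hx S hS]

/-- The total-degree-`k` component. -/
def Ldeg (k : ℕ) : Submodule ℂ Lam where
  carrier := {x | ∀ S : Finset (Fin 6), S.card ≠ k → x S = 0}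
  add_mem' := by intro a b ha hb S hS; simp [ha S hS, hb S hS]
  zero_mem' := by intro S _; rfl
  smul_mem' := by intro c x hx S hS; simp [hx S hS]

/-- `D` is a graded derivation of bidegree `(a,b)`: it maps `Λ^{p,q}` to `Λ^{p+a,q+b}` and
satisfies the graded Leibniz rule with the sign of the total degree. -/
def IsDer (D : Lam →ₗ[ℂ] Lam) (a b : ℕ) : Prop :=
  (∀ p q : ℕ, ∀ x ∈ Lpq p q, D x ∈ Lpq (p + a) (q + b)) ∧
  (∀ k : ℕ, ∀ x ∈ Ldeg k, ∀ y : Lam,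
    D (x ⋏ y) = (D x) ⋏ y + ((-1 : ℂ)) ^ k • (x ⋏ D y))

/-- `D` is the operator `∂_t` : the graded derivation of bidegree `(1,0)` determined on the
generators by the structure equations of the deformed Calabi–Eckmann structure `J_t`
(the values on the conjugate generators `φ 3, φ 4, φ 5` being obtained
by applying the conjugation `σ` to the values of `∂̄_t`). -/
def IsDelT (t : ℂ) (D : Lam →ₗ[ℂ] Lam) : Prop :=
  IsDer D 1 0 ∧
  D (φ 0) = (Complex.I * ((starRingEnd ℂ) t + 1) / (1 - Complex.normSq t)) • (φ 0 ⋏ φ 2) ∧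
  D (φ 1) = ((1 - (starRingEnd ℂ) t) / (1 - Complex.normSq t)) • (φ 1 ⋏ φ 2) ∧
  D (φ 2) = 0 ∧
  D (φ 3) = (-(Complex.I * ((starRingEnd ℂ) t + 1)) / (1 - Complex.normSq t)) • (φ 3 ⋏ φ 2) ∧
  D (φ 4) = (((starRingEnd ℂ) t - 1) / (1 - Complex.normSq t)) • (φ 4 ⋏ φ 2) ∧
  D (φ 5) = ((starRingEnd ℂ) t + Complex.I) • (φ 3 ⋏ φ 0) + ((starRingEnd ℂ) t + 1) • (φ 4 ⋏ φ 1)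

/-- `Db` is the operator `∂̄_t`. -/
def IsDelBarT (t : ℂ) (Db : Lam →ₗ[ℂ] Lam) : Prop :=
  IsDer Db 0 1 ∧
  Db (φ 0) = (Complex.I * (t + 1) / (1 - Complex.normSq t)) • (φ 0 ⋏ φ 5) ∧
  Db (φ 1) = ((t - 1) / (1 - Complex.normSq t)) • (φ 1 ⋏ φ 5) ∧
  Db (φ 2) = (t - Complex.I) • (φ 0 ⋏ φ 3) + (t + 1) • (φ 1 ⋏ φ 4) ∧
  Db (φ 3) = (-(Complex.I * (t + 1)) / (1 - Complex.normSq t)) • (φ 3 ⋏ φ 5) ∧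
  Db (φ 4) = ((1 - t) / (1 - Complex.normSq t)) • (φ 4 ⋏ φ 5) ∧
  Db (φ 5) = 0

/-- The Bott–Chern cocycles in bidegree `(p,q)` : `Ker ∂ ∩ Ker ∂̄ ∩ Λ^{p,q}`. -/
def Kbc (D Db : Lam →ₗ[ℂ] Lam) (p q : ℕ) : Submodule ℂ Lam :=
  LinearMap.ker D ⊓ LinearMap.ker Db ⊓ Lpq p q

/-- The Bott–Chern coboundaries in bidegree `(p,q)` : `∂∂̄(Λ^{p-1,q-1})`
(zero when `p = 0` or `q = 0`). -/
def Ibc (D Db : Lam →ₗ[ℂ] Lam) (p q : ℕ) : Submodule ℂ Lam :=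
  if p = 0 ∨ q = 0 then ⊥ else Submodule.map (D ∘ₗ Db) (Lpq (p - 1) (q - 1))

/-- The Aeppli cocycles in bidegree `(p,q)` : `Ker (∂∂̄) ∩ Λ^{p,q}`. -/
def Ka (D Db : Lam →ₗ[ℂ] Lam) (p q : ℕ) : Submodule ℂ Lam :=
  LinearMap.ker (D ∘ₗ Db) ⊓ Lpq p q

/-- The Aeppli coboundaries in bidegree `(p,q)` : `∂(Λ^{p-1,q}) + ∂̄(Λ^{p,q-1})`. -/
def Ia (D Db : Lam →ₗ[ℂ] Lam) (p q : ℕ) : Submodule ℂ Lam :=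
  (if p = 0 then ⊥ else Submodule.map D (Lpq (p - 1) q)) ⊔
  (if q = 0 then ⊥ else Submodule.map Db (Lpq p (q - 1)))

end

noncomputable section

/-- The fundamental form `ω_t = (i/2)(φ1∧φ̄1 + φ2∧φ̄2 + φ3∧φ̄3)` of the invariant
Hermitian metric on the deformation `X_t`. -/
def ω : Lam := (Complex.I / 2) • (φ 0 ⋏ φ 3 + φ 1 ⋏ φ 4 + φ 2 ⋏ φ 5)

lemma add_wedge (x y z : Lam) : (x + y) ⋏ z = x ⋏ z + y ⋏ z := by
  funext S
  simp only [wedge, Pi.add_apply, ← Finset.sum_add_distrib]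
  exact Finset.sum_congr rfl fun _ _ => by ring

lemma wedge_add (x y z : Lam) : x ⋏ (y + z) = x ⋏ y + x ⋏ z := by
  funext S
  simp only [wedge, Pi.add_apply, ← Finset.sum_add_distrib]
  exact Finset.sum_congr rfl fun _ _ => by ring

lemma smul_wedge (c : ℂ) (x y : Lam) : (c • x) ⋏ y = c • (x ⋏ y) := by
  funext S
  simp only [wedge, Pi.smul_apply, smul_eq_mul, Finset.mul_sum]
  exact Finset.sum_congr rfl fun _ _ => by ring

lemma wedge_smul (c : ℂ) (x y : Lam) : x ⋏ (c • y) = c • (x ⋏ y) := by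
  funext S
  simp only [wedge, Pi.smul_apply, smul_eq_mul, Finset.mul_sum]
  exact Finset.sum_congr rfl fun _ _ => by ring

def wedgeBilin : Lam →ₗ[ℂ] Lam →ₗ[ℂ] Lam :=
  LinearMap.mk₂ ℂ wedge add_wedge smul_wedge wedge_add wedge_smul

lemma wedge_zero (x : Lam) : x ⋏ 0 = 0 := (wedgeBilin x).map_zero

lemma neg_wedge (x y : Lam) : (-x) ⋏ y = -(x ⋏ y) := wedgeBilin.map_neg₂ x y

lemma wedge_neg (x y : Lam) : x ⋏ (-y) = -(x ⋏ y) := (wedgeBilin x).map_neg y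

lemma wedge_sub (x y z : Lam) : x ⋏ (y - z) = x ⋏ y - x ⋏ z := (wedgeBilin x).map_sub y z

lemma mon_wedge_mon_apply (T U S : Finset (Fin 6)) :
    (mon T ⋏ mon U) S = if T ⊆ S ∧ S \ T = U then wsign T U else 0 := by
  have hterm : ∀ T' ∈ S.powerset, wsign T' (S \ T') * mon T T' * mon U (S \ T') =
      if T = T' then (if S \ T = U then wsign T U else 0) else 0 := by
    rintro T' -
    rcases eq_or_ne T T' with rfl | hne
    · by_cases hU : S \ T = U <;> simp [mon, hU]
    · simp [mon, Pi.single_apply, hne.symm, hne]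
  rw [wedge, Finset.sum_congr rfl hterm, Finset.sum_ite_eq]
  simp only [Finset.mem_powerset, ite_and]

lemma mon_wedge_mon_of_disjoint {T U : Finset (Fin 6)} (h : Disjoint T U) :
    mon T ⋏ mon U = wsign T U • mon (T ∪ U) := by
  funext S
  have hS : T ⊆ S ∧ S \ T = U ↔ S = T ∪ U := by
    constructor
    · rintro ⟨hTS, rfl⟩; exact (Finset.union_sdiff_of_subset hTS).symm
    · rintro rfl; exact ⟨Finset.subset_union_left, Finset.union_sdiff_cancel_left h⟩
  rw [mon_wedge_mon_apply]
  simp [hS, mon, Pi.single_apply]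

lemma mon_wedge_mon_of_not_disjoint {T U : Finset (Fin 6)} (h : ¬Disjoint T U) :
    mon T ⋏ mon U = 0 := by
  funext S
  rw [mon_wedge_mon_apply,
    if_neg fun hS : T ⊆ S ∧ S \ T = U => h (hS.2 ▸ Finset.sdiff_disjoint.symm)]
  rfl

lemma mon_wedge_mon_of_even {T U V : Finset (Fin 6)}
    (h : Disjoint T U ∧ T ∪ U = V ∧ Even ((T ×ˢ U).filter fun p => p.2 < p.1).card) :
    mon T ⋏ mon U = mon V := by
  rw [mon_wedge_mon_of_disjoint h.1, h.2.1, wsign, h.2.2.neg_one_pow, one_smul]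

lemma mon_wedge_mon_of_odd {T U V : Finset (Fin 6)}
    (h : Disjoint T U ∧ T ∪ U = V ∧ Odd ((T ×ˢ U).filter fun p => p.2 < p.1).card) :
    mon T ⋏ mon U = -mon V := by
  rw [mon_wedge_mon_of_disjoint h.1, h.2.1, wsign, h.2.2.neg_one_pow, neg_one_smul]

lemma smul_mon_eq_zero_iff {c : ℂ} {S : Finset (Fin 6)} : c • mon S = 0 ↔ c = 0 := by
  refine ⟨fun h => ?_, fun h => h ▸ zero_smul ℂ _⟩
  simpa [mon] using congrFun h S

lemma IsDer.map_φ_wedge {D : Lam →ₗ[ℂ] Lam} {a b : ℕ} (hD : IsDer D a b) (j : Fin 6) (y : Lam) :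
    D (φ j ⋏ y) = D (φ j) ⋏ y - φ j ⋏ D y := by
  have hφ : φ j ∈ Ldeg 1 := by
    intro S hS
    have : S ≠ {j} := by rintro rfl; simp at hS
    simp [φ, mon, this]
  rw [hD.2 1 (φ j) hφ y, pow_one, neg_one_smul, ← sub_eq_add_neg]

section delBar

variable {t : ℂ} {Db : Lam →ₗ[ℂ] Lam} (hDb : IsDelBarT t Db)
include hDb

lemma IsDelBarT.map_φ0_wedge_φ3 : Db (φ 0 ⋏ φ 3) = 0 := by
  obtain ⟨hder, h0, -, -, h3, -, -⟩ := hDb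
  have e05 : mon {0} ⋏ mon {5} = mon {0,5} := mon_wedge_mon_of_even (by decide)
  have e35 : mon {3} ⋏ mon {5} = mon {3,5} := mon_wedge_mon_of_even (by decide)
  have e05_3 : mon {0,5} ⋏ mon {3} = -mon {0,3,5} := mon_wedge_mon_of_odd (by decide)
  have e0_35 : mon {0} ⋏ mon {3,5} = mon {0,3,5} := mon_wedge_mon_of_even (by decide)
  rw [hder.map_φ_wedge, h0, h3]
  simp only [φ, smul_wedge, wedge_smul, e05, e35, e05_3, e0_35]
  module

lemma IsDelBarT.map_φ1_wedge_φ4 : Db (φ 1 ⋏ φ 4) = 0 := by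
  obtain ⟨hder, -, h1, -, -, h4, -⟩ := hDb
  have e15 : mon {1} ⋏ mon {5} = mon {1,5} := mon_wedge_mon_of_even (by decide)
  have e45 : mon {4} ⋏ mon {5} = mon {4,5} := mon_wedge_mon_of_even (by decide)
  have e15_4 : mon {1,5} ⋏ mon {4} = -mon {1,4,5} := mon_wedge_mon_of_odd (by decide)
  have e1_45 : mon {1} ⋏ mon {4,5} = mon {1,4,5} := mon_wedge_mon_of_even (by decide)
  rw [hder.map_φ_wedge, h1, h4]
  simp only [φ, smul_wedge, wedge_smul, e15, e45, e15_4, e1_45]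
  module

lemma IsDelBarT.map_φ2_wedge_φ5 :
    Db (φ 2 ⋏ φ 5) = (t - Complex.I) • mon {0,3,5} + (t + 1) • mon {1,4,5} := by
  obtain ⟨hder, -, -, h2, -, -, h5⟩ := hDb
  have e03 : mon {0} ⋏ mon {3} = mon {0,3} := mon_wedge_mon_of_even (by decide)
  have e14 : mon {1} ⋏ mon {4} = mon {1,4} := mon_wedge_mon_of_even (by decide)
  have e03_5 : mon {0,3} ⋏ mon {5} = mon {0,3,5} := mon_wedge_mon_of_even (by decide)
  have e14_5 : mon {1,4} ⋏ mon {5} = mon {1,4,5} := mon_wedge_mon_of_even (by decide)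
  rw [hder.map_φ_wedge, h2, h5]
  simp only [φ, add_wedge, smul_wedge, wedge_zero, sub_zero, e03, e14, e03_5, e14_5]

lemma IsDelBarT.map_ω :
    Db ω = (Complex.I / 2) • ((t - Complex.I) • mon {0,3,5} + (t + 1) • mon {1,4,5}) := by
  rw [ω, map_smul, map_add, map_add, hDb.map_φ0_wedge_φ3, hDb.map_φ1_wedge_φ4,
    hDb.map_φ2_wedge_φ5, zero_add, zero_add]

end delBar

section del

variable {t : ℂ} {D : Lam →ₗ[ℂ] Lam} (hD : IsDelT t D)
include hD

lemma IsDelT.map_mon_035 : D (mon {0,3,5}) = ((starRingEnd ℂ) t + 1) • mon {0,1,3,4} := by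
  obtain ⟨hder, h0, -, -, h3, -, h5⟩ := hD
  have e35 : mon {3} ⋏ mon {5} = mon {3,5} := mon_wedge_mon_of_even (by decide)
  have e0_35 : mon {0} ⋏ mon {3,5} = mon {0,3,5} := mon_wedge_mon_of_even (by decide)
  have e02 : mon {0} ⋏ mon {2} = mon {0,2} := mon_wedge_mon_of_even (by decide)
  have e32 : mon {3} ⋏ mon {2} = -mon {2,3} := mon_wedge_mon_of_odd (by decide)
  have e30 : mon {3} ⋏ mon {0} = -mon {0,3} := mon_wedge_mon_of_odd (by decide)
  have e41 : mon {4} ⋏ mon {1} = -mon {1,4} := mon_wedge_mon_of_odd (by decide)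
  have e02_35 : mon {0,2} ⋏ mon {3,5} = mon {0,2,3,5} := mon_wedge_mon_of_even (by decide)
  have e23_5 : mon {2,3} ⋏ mon {5} = mon {2,3,5} := mon_wedge_mon_of_even (by decide)
  have e0_235 : mon {0} ⋏ mon {2,3,5} = mon {0,2,3,5} := mon_wedge_mon_of_even (by decide)
  have e3_03 : mon {3} ⋏ mon {0,3} = 0 := mon_wedge_mon_of_not_disjoint (by decide)
  have e3_14 : mon {3} ⋏ mon {1,4} = -mon {1,3,4} := mon_wedge_mon_of_odd (by decide)
  have e0_134 : mon {0} ⋏ mon {1,3,4} = mon {0,1,3,4} := mon_wedge_mon_of_even (by decide)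
  have hmon : mon {0,3,5} = φ 0 ⋏ (φ 3 ⋏ φ 5) := by simp only [φ, e35, e0_35]
  rw [hmon, hder.map_φ_wedge, hder.map_φ_wedge, h0, h3, h5]
  simp only [φ, smul_wedge, neg_wedge, wedge_add, wedge_smul, wedge_neg, wedge_sub, wedge_zero,
    e35, e02, e32, e30, e41, e02_35, e23_5, e0_235, e3_03, e3_14, e0_134]
  module

lemma IsDelT.map_mon_145 : D (mon {1,4,5}) = ((starRingEnd ℂ) t + Complex.I) • mon {0,1,3,4} := by
  obtain ⟨hder, -, h1, -, -, h4, h5⟩ := hD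
  have e45 : mon {4} ⋏ mon {5} = mon {4,5} := mon_wedge_mon_of_even (by decide)
  have e1_45 : mon {1} ⋏ mon {4,5} = mon {1,4,5} := mon_wedge_mon_of_even (by decide)
  have e12 : mon {1} ⋏ mon {2} = mon {1,2} := mon_wedge_mon_of_even (by decide)
  have e42 : mon {4} ⋏ mon {2} = -mon {2,4} := mon_wedge_mon_of_odd (by decide)
  have e30 : mon {3} ⋏ mon {0} = -mon {0,3} := mon_wedge_mon_of_odd (by decide)
  have e41 : mon {4} ⋏ mon {1} = -mon {1,4} := mon_wedge_mon_of_odd (by decide)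
  have e12_45 : mon {1,2} ⋏ mon {4,5} = mon {1,2,4,5} := mon_wedge_mon_of_even (by decide)
  have e24_5 : mon {2,4} ⋏ mon {5} = mon {2,4,5} := mon_wedge_mon_of_even (by decide)
  have e1_245 : mon {1} ⋏ mon {2,4,5} = mon {1,2,4,5} := mon_wedge_mon_of_even (by decide)
  have e4_14 : mon {4} ⋏ mon {1,4} = 0 := mon_wedge_mon_of_not_disjoint (by decide)
  have e4_03 : mon {4} ⋏ mon {0,3} = mon {0,3,4} := mon_wedge_mon_of_even (by decide)
  have e1_034 : mon {1} ⋏ mon {0,3,4} = -mon {0,1,3,4} := mon_wedge_mon_of_odd (by decide)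
  have hmon : mon {1,4,5} = φ 1 ⋏ (φ 4 ⋏ φ 5) := by simp only [φ, e45, e1_45]
  rw [hmon, hder.map_φ_wedge, hder.map_φ_wedge, h1, h4, h5]
  simp only [φ, smul_wedge, neg_wedge, wedge_add, wedge_smul, wedge_neg, wedge_sub, wedge_zero,
    e45, e12, e42, e30, e41, e12_45, e24_5, e1_245, e4_14, e4_03, e1_034]
  module

end del

lemma del_delBar_ω {t : ℂ} {D Db : Lam →ₗ[ℂ] Lam} (hD : IsDelT t D) (hDb : IsDelBarT t Db) :
    D (Db ω) = (Complex.I * ((Complex.normSq t + t.re - t.im : ℝ) : ℂ)) • mon {0,1,3,4} := by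
  have hcoeff : (t - Complex.I) * ((starRingEnd ℂ) t + 1) + (t + 1) * ((starRingEnd ℂ) t + Complex.I)
      = 2 * ((Complex.normSq t + t.re - t.im : ℝ) : ℂ) := by
    apply Complex.ext <;> simp [Complex.normSq] <;> ring
  rw [hDb.map_ω, map_smul, map_add, map_smul, map_smul, hD.map_mon_035, hD.map_mon_145,
    smul_smul, smul_smul, ← add_smul, hcoeff, smul_smul]
  congr 1
  ring

theorem stmt13_general (t : ℂ)
    (D Db : Lam →ₗ[ℂ] Lam) (hD : IsDelT t D) (hDb : IsDelBarT t Db) :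
    D (Db ω) = 0 ↔ Complex.normSq t + t.re - t.im = 0 := by
  rw [del_delBar_ω hD hDb, smul_mon_eq_zero_iff, mul_eq_zero, or_iff_right Complex.I_ne_zero,
    Complex.ofReal_eq_zero]

/-- for `|t| < 1`, the invariant Hermitian metric `ω_t` on the deformation
`X_t` of the Calabi–Eckmann manifold `S³×S³` is SKT (`∂_t∂̄_t ω_t = 0`) if and only if
`|t|² + Re t - Im t = 0`. -/
theorem stmt13 (t : ℂ) (ht : ‖t‖ < 1)
    (D Db : Lam →ₗ[ℂ] Lam) (hD : IsDelT t D) (hDb : IsDelBarT t Db) :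
    D (Db ω) = 0 ↔ Complex.normSq t + t.re - t.im = 0 :=
  stmt13_general t D Db hD hDb

end
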